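/- (Theorem, part i, backward direction.) Assume U is nonempty. Let x : V → {0,1} be (P)-feasible, and let W = {v ∈ V : x(v) = 1}. Then W is nonempty, W is OSDNP-feasible, and d_acc^W(u) = d_acc^x(u) for every u ∈ U. -/
import Mathlib


/-- `d_acc^W u`: the minimal access time from urban area `u` to a stop of `W`
(for nonempty finite `W` the infimum below is the minimum). -/
noncomputable def daccW {V U : Type*} (d : U → V → ℝ) (W : Finset V) (u : U) : ℝ :=
  sInf (d u '' ↑W)

/-- `d_acc u = d_acc^V u`: the minimal access time over all bus stops. -/
noncomputable def daccV {V U : Type*} [Fintype V] (d : U → V → ℝ) (u : U) : ℝ :=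
  daccW d Finset.univ u

/-- `d_acc^x u = min_{v ∈ D_u^k} (d u v + (1 − x v) * M)`, the big-M penalized
access time of constraint (2) of program (P), where
`D_u^k = {v | d u v ≤ k u * d_acc u}` (nonempty since `acc u ∈ D_u^k`). -/
noncomputable def daccX {V U : Type*} [Fintype V] (d : U → V → ℝ) (k : U → ℝ)
    (M : ℝ) (x : V → ℝ) (u : U) : ℝ :=
  sInf ((fun v => d u v + (1 - x v) * M) '' {v | d u v ≤ k u * daccV d u})

/-- The 0/1 indicator vector `x_W` of a subset `W` of `V`. -/
def indW {V : Type*} [DecidableEq V] (W : Finset V) (v : V) : ℝ :=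
  if v ∈ W then 1 else 0

/-- A nonempty subset `W ⊆ V` is OSDNP-feasible if (A) the access times do not
increase by more than the factors `k u`, (B) no origin/destination delay increases
by more than the factor `α`, and (C) `|W| ≤ (1 − p_elim) * |V|`. -/
def OSDNPfeasible {V U : Type*} [Fintype V] (d : U → V → ℝ) (k : U → ℝ)
    (PC : V → V → ℝ) (acc : U → V) (α pelim : ℝ) (W : Finset V) : Prop :=
  W.Nonempty ∧
  (∀ u, daccW d W u ≤ k u * daccV d u) ∧
  (∀ u1 u2, daccW d W u1 + daccW d W u2 + PC (acc u1) (acc u2) ≤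
      α * (daccV d u1 + daccV d u2 + PC (acc u1) (acc u2))) ∧
  ((W.card : ℝ) ≤ (1 - pelim) * (Fintype.card V : ℝ))

/-- `x : V → {0,1}` is (P)-feasible if (1) every `u` has a retained stop in `D_u^k`,
(3) the delay constraints hold for `d_acc^x`, and (4) `∑_v x v ≤ (1 − p_elim) * |V|`. -/
def Pfeasible {V U : Type*} [Fintype V] [Fintype U] (d : U → V → ℝ) (k : U → ℝ)
    (PC : V → V → ℝ) (acc : U → V) (α pelim M : ℝ) (x : V → ℝ) : Prop :=
  (∀ u, ∃ v, d u v ≤ k u * daccV d u ∧ x v = 1) ∧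
  (∀ u1 u2, daccX d k M x u1 + daccX d k M x u2 + PC (acc u1) (acc u2) ≤
      α * (daccV d u1 + daccV d u2 + PC (acc u1) (acc u2))) ∧
  (∑ v, x v ≤ (1 - pelim) * (Fintype.card V : ℝ))


section Aux
variable {V U : Type*}

lemma daccW_le (d : U → V → ℝ) (W : Finset V) (u : U) {v : V} (hv : v ∈ W) :
    daccW d W u ≤ d u v :=
  csInf_le (W.finite_toSet.image _).bddBelow ⟨v, hv, rfl⟩

lemma le_daccW (d : U → V → ℝ) {W : Finset V} (hW : W.Nonempty) (u : U) {c : ℝ}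
    (h : ∀ v ∈ W, c ≤ d u v) : c ≤ daccW d W u := by
  refine le_csInf ((Finset.coe_nonempty.mpr hW).image (d u)) ?_
  rintro _ ⟨v, hv, rfl⟩
  exact h v hv

lemma exists_daccW (d : U → V → ℝ) {W : Finset V} (hW : W.Nonempty) (u : U) :
    ∃ v ∈ W, daccW d W u = d u v := by
  obtain ⟨v, hv, hve⟩ :=
    ((Finset.coe_nonempty.mpr hW).image (d u)).csInf_mem (W.finite_toSet.image _)
  exact ⟨v, hv, hve.symm⟩

lemma daccX_le [Fintype V] (d : U → V → ℝ) (k : U → ℝ) (M : ℝ) (x : V → ℝ) (u : U)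
    {v : V} (hv : d u v ≤ k u * daccV d u) :
    daccX d k M x u ≤ d u v + (1 - x v) * M :=
  csInf_le ((Set.toFinite _).image _).bddBelow ⟨v, hv, rfl⟩

lemma exists_daccX [Fintype V] (d : U → V → ℝ) (k : U → ℝ) (M : ℝ) (x : V → ℝ) (u : U)
    (hne : ∃ v, d u v ≤ k u * daccV d u) :
    ∃ v, d u v ≤ k u * daccV d u ∧ daccX d k M x u = d u v + (1 - x v) * M := by
  obtain ⟨v0, hv0⟩ := hne
  obtain ⟨v, hv, hve⟩ :=
    (Set.Nonempty.image (fun v => d u v + (1 - x v) * M) ⟨v0, hv0⟩).csInf_mem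
      ((Set.toFinite {v | d u v ≤ k u * daccV d u}).image _)
  exact ⟨v, hv, hve.symm⟩

end Aux

/-- Theorem, part i, backward direction: if `U` is nonempty and `x : V → {0,1}` is
(P)-feasible, then `W = {v | x v = 1}` is nonempty, OSDNP-feasible, and
`d_acc^W u = d_acc^x u` for every `u`. -/
theorem stmt9 {V U : Type*} [Fintype V] [Nonempty V] [Fintype U] [Nonempty U]
    (d : U → V → ℝ) (hd : ∀ u v, 0 ≤ d u v)
    (k : U → ℝ) (hk : ∀ u, 1 ≤ k u)
    (PC : V → V → ℝ) (hPC : ∀ v1 v2, 0 ≤ PC v1 v2)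
    (acc : U → V) (hacc : ∀ u, d u (acc u) = daccV d u)
    (α : ℝ) (hα : 1 ≤ α) (pelim : ℝ) (hp0 : 0 ≤ pelim) (hp1 : pelim ≤ 1)
    (OD : U → U → ℕ)
    (M : ℝ) (hM : ∀ u v, d u v ≤ M)
    (x : V → ℝ) (hx01 : ∀ v, x v = 0 ∨ x v = 1)
    (hx : Pfeasible d k PC acc α pelim M x) :
    (Finset.univ.filter fun v => x v = 1).Nonempty ∧
      OSDNPfeasible d k PC acc α pelim (Finset.univ.filter fun v => x v = 1) ∧
      ∀ u, daccW d (Finset.univ.filter fun v => x v = 1) u = daccX d k M x u := by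
 classical
  obtain ⟨h1, h3, h4⟩ := hx
  set W : Finset V := Finset.univ.filter fun v => x v = 1 with hWdef
  have hmemW : ∀ v, v ∈ W ↔ x v = 1 := by
    intro v; simp [hWdef]
  have hWne : W.Nonempty := by
    obtain ⟨v, _, hv1⟩ := h1 (Classical.arbitrary U)
    exact ⟨v, (hmemW v).mpr hv1⟩
  have hV0 : ∀ u, 0 ≤ daccV d u := fun u =>
    le_daccW d Finset.univ_nonempty u (fun v _ => hd u v)
  -- key equality
  have key : ∀ u, daccW d W u = daccX d k M x u := by
    intro u
    obtain ⟨v0, hv0D, hv0x⟩ := h1 u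
    have hv0W : v0 ∈ W := (hmemW v0).mpr hv0x
    refine le_antisymm ?_ ?_
    · obtain ⟨v, hvD, hveq⟩ := exists_daccX d k M x u ⟨v0, hv0D⟩
      rw [hveq]
      rcases hx01 v with h0 | h1'
      · have : daccW d W u ≤ d u v0 := daccW_le d W u hv0W
        have hM' : d u v0 ≤ M := hM u v0
        have : daccW d W u ≤ M := this.trans hM'
        nlinarith [hd u v]
      · have hvW : v ∈ W := (hmemW v).mpr h1'
        have := daccW_le d W u hvW
        rw [h1']; linarith
    · obtain ⟨v, hvW, hveq⟩ := exists_daccW d hWne u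
      have hvx : x v = 1 := (hmemW v).mp hvW
      have hle : d u v ≤ k u * daccV d u := by
        calc d u v = daccW d W u := hveq.symm
          _ ≤ d u v0 := daccW_le d W u hv0W
          _ ≤ k u * daccV d u := hv0D
      have := daccX_le d k M x u hle
      rw [hveq, hvx] at *
      linarith
  refine ⟨hWne, ⟨hWne, ?_, ?_, ?_⟩, key⟩
  · intro u
    obtain ⟨v0, hv0D, hv0x⟩ := h1 u
    exact (daccW_le d W u ((hmemW v0).mpr hv0x)).trans hv0D
  · intro u1 u2
    rw [key u1, key u2]; exact h3 u1 u2
  · have hcard : (W.card : ℝ) = ∑ v, x v := by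
      rw [hWdef, Finset.card_filter]
      push_cast
      refine Finset.sum_congr rfl fun v _ => ?_
      rcases hx01 v with h | h <;> simp [h]
    rw [hcard]; exact h4
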